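/- arXiv:1807.06152 — 10 statements merged into one kernel-verified Lean document; each statement's English description precedes it below -/
import Mathlib

section
/- Let A : E → E* be a bounded skew linear operator on a real Banach space E, let x** ∈ E**, λ > 0, and suppose A* x** lies in the norm closure of the range of A + λJ, where J is the duality map. Then -⟨A* x**, x**⟩ ≤ (λ/4)‖x**‖². -/
/-!
Write `f = A* x** = x** ∘ A` and take `y = A x + λ x*` with `x* ∈ J x`. Skewness gives
`y x = λ‖x‖²`, so `f x ≥ λ‖x‖² - ‖f - y‖‖x‖`, while `x** y = f x + λ x** x*` and
`x** x* ≥ -‖x**‖‖x‖`. Completing the square in `‖x‖` yields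
`-x** f ≤ (λ‖x**‖ + ‖f - y‖)² / (4λ) + ‖x**‖‖f - y‖`. The right-hand side is continuous in `y`,
so the inequality passes to the closure of `R(A + λJ)`, and at `y = f` it is the claim.
-/

lemma mul_sub_mul_sq_le_sq_div {l : ℝ} (hl : 0 < l) (a t : ℝ) :
    a * t - l * t ^ 2 ≤ a ^ 2 / (4 * l) := by
  rw [le_div_iff₀ (by positivity)]
  nlinarith [sq_nonneg (2 * l * t - a)]

lemma abs_apply_le_opNorm_mul {F : Type*} [SeminormedAddCommGroup F] [NormedSpace ℝ F]
    (g : StrongDual ℝ F) (v : F) : |g v| ≤ ‖g‖ * ‖v‖ :=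
  g.le_opNorm v

lemma neg_apply_comp_le_of_mem_duality {E : Type*} [NormedAddCommGroup E] [NormedSpace ℝ E]
    {A : E →L[ℝ] StrongDual ℝ E} (hskew : ∀ x : E, A x x = 0)
    (xss : StrongDual ℝ (StrongDual ℝ E)) {lam : ℝ} (hlam : 0 < lam) {x : E} {xs : StrongDual ℝ E}
    (hxs : ‖xs‖ = ‖x‖) (hxsx : xs x = ‖x‖ ^ 2) :
    -xss (xss.comp A) ≤ (lam * ‖xss‖ + ‖xss.comp A - (A x + lam • xs)‖) ^ 2 / (4 * lam)
      + ‖xss‖ * ‖xss.comp A - (A x + lam • xs)‖ := by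
  set f := xss.comp A
  set y := A x + lam • xs
  set d := ‖f - y‖
  have hy_x : y x = lam * ‖x‖ ^ 2 := by simp [y, hskew, hxsx]
  have hxss_y : xss y = f x + lam * xss xs := by simp [y, f]
  have hf_x : lam * ‖x‖ ^ 2 - d * ‖x‖ ≤ f x := by
    have := (abs_le.1 (abs_apply_le_opNorm_mul (f - y) x)).1
    simp only [sub_apply] at this
    linarith
  have hxss_xs : -(‖xss‖ * ‖x‖) ≤ xss xs := by
    simpa [hxs] using (abs_le.1 (abs_apply_le_opNorm_mul xss xs)).1
  have hxss_fy : -(‖xss‖ * d) ≤ xss (f - y) :=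
    (abs_le.1 (abs_apply_le_opNorm_mul xss (f - y))).1
  calc -xss f = -xss y - xss (f - y) := by rw [map_sub]; ring
    _ ≤ (lam * ‖xss‖ + d) * ‖x‖ - lam * ‖x‖ ^ 2 + ‖xss‖ * d := by
      linarith [mul_le_mul_of_nonneg_left hxss_xs hlam.le]
    _ ≤ (lam * ‖xss‖ + d) ^ 2 / (4 * lam) + ‖xss‖ * d := by
      gcongr
      exact mul_sub_mul_sq_le_sq_div hlam _ _

theorem skew_range_bound_general {E : Type*} [NormedAddCommGroup E] [NormedSpace ℝ E]
    (A : E →L[ℝ] StrongDual ℝ E)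
    (hskew : ∀ x : E, A x x = 0)
    (xss : StrongDual ℝ (StrongDual ℝ E)) (lam : ℝ) (hlam : 0 < lam)
    (h : (xss.comp A) ∈ closure {y : StrongDual ℝ E |
        ∃ (x : E) (xs : StrongDual ℝ E),
          ‖xs‖ = ‖x‖ ∧ xs x = ‖x‖ ^ 2 ∧ y = A x + lam • xs}) :
    - xss (xss.comp A) ≤ lam / 4 * ‖xss‖ ^ 2 := by
  set f := xss.comp A
  have hclosed : IsClosed {y : StrongDual ℝ E |
      -xss f ≤ (lam * ‖xss‖ + ‖f - y‖) ^ 2 / (4 * lam) + ‖xss‖ * ‖f - y‖} :=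
    isClosed_le continuous_const (by fun_prop)
  have hf_mem := closure_minimal (by
    rintro _ ⟨x, xs, hxs, hxsx, rfl⟩
    exact neg_apply_comp_le_of_mem_duality hskew xss hlam hxs hxsx) hclosed h
  rw [Set.mem_ofPred_eq, sub_self, norm_zero, add_zero, mul_zero, add_zero] at hf_mem
  convert hf_mem using 1
  field_simp

theorem skew_range_bound {E : Type*} [NormedAddCommGroup E] [NormedSpace ℝ E]
    [CompleteSpace E] (A : E →L[ℝ] StrongDual ℝ E)
    (hskew : ∀ x : E, A x x = 0)
    (xss : StrongDual ℝ (StrongDual ℝ E)) (lam : ℝ) (hlam : 0 < lam)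
    (h : (xss.comp A) ∈ closure {y : StrongDual ℝ E |
        ∃ (x : E) (xs : StrongDual ℝ E),
          ‖xs‖ = ‖x‖ ∧ xs x = ‖x‖ ^ 2 ∧ y = A x + lam • xs}) :
    - xss (xss.comp A) ≤ lam / 4 * ‖xss‖ ^ 2 :=
  skew_range_bound_general A hskew xss lam hlam h
end

section
/- The Gossez operator G : ℓ¹ → ℓ∞ defined by (Gx)_m = Σ_{n > m} x_n − Σ_{n < m} x_n is a bounded linear operator with ⟨x, Gx⟩ = 0 for all x ∈ ℓ¹ (i.e., G is skew). -/
noncomputable section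
open scoped ENNReal
open Filter

abbrev ell1 := lp (fun _ : ℕ => ℝ) 1
abbrev ellInfty := lp (fun _ : ℕ => ℝ) ∞

/-- The Gossez operator, coordinatewise: (Gx)_m = Σ_{n>m} x_n − Σ_{n<m} x_n. -/
def Gfun (x : ℕ → ℝ) (m : ℕ) : ℝ :=
  (∑' n, if m < n then x n else 0) - ∑ n ∈ Finset.range m, x n

/-- The all-ones sequence e* ∈ ℓ∞. -/
def eStar : ellInfty :=
  ⟨fun _ => (1 : ℝ), memℓp_infty ⟨1, by rintro r ⟨i, rfl⟩; simp⟩⟩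

/-- The m-th standard unit vector e*_m ∈ ℓ∞. -/
def eVec (m : ℕ) : ellInfty := lp.single ∞ m (1 : ℝ)

/-! The Gossez operator is the kernel operator `x ↦ (∑ₙ k m n xₙ)ₘ` with the sign kernel
`k m n = sign (n - m)`. A kernel bounded by `C` maps `ℓ¹` into `ℓ∞` with norm at most `C`,
and `⟨x, Gx⟩ = ∑ₘ ∑ₙ xₘ k m n xₙ` is an absolutely convergent double series which changes sign
under `m ↔ n` because `k` is antisymmetric, so it vanishes. -/

open scoped NNReal

namespace lp

variable {α : Type*}

lemma summable_abs_of_one (x : lp (fun _ : α => ℝ) 1) : Summable fun n => |x n| := by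
  simpa using (lp.memℓp x).summable (by norm_num : (0 : ℝ) < (1 : ℝ≥0∞).toReal)

lemma norm_eq_tsum_abs_of_one (x : lp (fun _ : α => ℝ) 1) : ‖x‖ = ∑' n, |x n| := by
  simp [lp.norm_eq_tsum_rpow (by norm_num : (0 : ℝ) < (1 : ℝ≥0∞).toReal) x]

lemma summable_mul_of_abs_le (x : lp (fun _ : α => ℝ) 1) {c : α → ℝ} {C : ℝ}
    (hc : ∀ n, |c n| ≤ C) : Summable fun n => c n * x n :=
  ((summable_abs_of_one x).mul_left C).of_norm_bounded fun n => by
    rw [Real.norm_eq_abs, abs_mul]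
    exact mul_le_mul_of_nonneg_right (hc n) (abs_nonneg _)

lemma abs_tsum_mul_le (x : lp (fun _ : α => ℝ) 1) {c : α → ℝ} {C : ℝ}
    (hc : ∀ n, |c n| ≤ C) : |∑' n, c n * x n| ≤ C * ‖x‖ := by
  have hsum := summable_mul_of_abs_le x hc
  calc |∑' n, c n * x n| ≤ ∑' n, |c n * x n| := by
        simpa only [Real.norm_eq_abs] using norm_tsum_le_tsum_norm hsum.norm
    _ ≤ ∑' n, C * |x n| := by
        refine hsum.abs.tsum_le_tsum (fun n => ?_) ((summable_abs_of_one x).mul_left C)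
        rw [abs_mul]
        exact mul_le_mul_of_nonneg_right (hc n) (abs_nonneg _)
    _ = C * ‖x‖ := by rw [tsum_mul_left, norm_eq_tsum_abs_of_one]

lemma summable_ite_of_one (x : lp (fun _ : α => ℝ) 1) (p : α → Prop) [DecidablePred p] :
    Summable fun n => if p n then x n else 0 :=
  (summable_abs_of_one x).of_norm_bounded fun n => by split_ifs <;> simp

def kernelOperator (k : α → α → ℝ) (C : ℝ≥0) (hk : ∀ m n, |k m n| ≤ C) :
    lp (fun _ : α => ℝ) 1 →L[ℝ] lp (fun _ : α => ℝ) ∞ :=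
  LinearMap.mkContinuous
    { toFun x := ⟨fun m => ∑' n, k m n * x n,
        memℓp_infty ⟨C * ‖x‖, by rintro _ ⟨m, rfl⟩; exact abs_tsum_mul_le x (hk m)⟩⟩
      map_add' x y := by
        ext m
        simp only [lp.coeFn_add, Pi.add_apply, mul_add]
        exact (summable_mul_of_abs_le x (hk m)).tsum_add (summable_mul_of_abs_le y (hk m))
      map_smul' c x := by
        ext m
        simp only [lp.coeFn_smul, Pi.smul_apply, smul_eq_mul, mul_left_comm _ c, tsum_mul_left]
        rfl }
    C fun x => lp.norm_le_of_forall_le (by positivity) fun m => abs_tsum_mul_le x (hk m)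

theorem tsum_mul_tsum_eq_zero_of_antisymm {k : α → α → ℝ} {C : ℝ} (hk : ∀ m n, |k m n| ≤ C)
    (hanti : ∀ m n, k n m = -k m n) (x : lp (fun _ : α => ℝ) 1) :
    ∑' m, x m * ∑' n, k m n * x n = 0 := by
  set F : α × α → ℝ := fun p => x p.1 * (k p.1 p.2 * x p.2)
  have hF : Summable F := by
    have habs : Summable fun p : α × α => |x p.1| * |x p.2| :=
      summable_mul_of_summable_norm (f := fun n => |x n|) (g := fun n => |x n|)
        (by simpa only [Real.norm_eq_abs, abs_abs] using summable_abs_of_one x)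
        (by simpa only [Real.norm_eq_abs, abs_abs] using summable_abs_of_one x)
    refine (habs.mul_left C).of_norm_bounded fun p => ?_
    rw [Real.norm_eq_abs, abs_mul, abs_mul, mul_left_comm]
    exact mul_le_mul_of_nonneg_right (hk _ _) (by positivity)
  have hswap : ∑' p, F p = -∑' p, F p := by
    calc ∑' p, F p = ∑' p, F (Prod.swap p) := ((Equiv.prodComm α α).tsum_eq F).symm
      _ = ∑' p, -F p := tsum_congr fun p => by
          change x p.2 * (k p.2 p.1 * x p.1) = -(x p.1 * (k p.1 p.2 * x p.2))
          rw [hanti]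
          ring
      _ = -∑' p, F p := tsum_neg
  calc ∑' m, x m * ∑' n, k m n * x n = ∑' p, F p := by
        simp_rw [← tsum_mul_left]
        exact (hF.tsum_prod' fun m => (summable_mul_of_abs_le x (hk m)).mul_left (x m)).symm
    _ = 0 := self_eq_neg.mp hswap

end lp

def gossezKernel (m n : ℕ) : ℝ := Real.sign ((n : ℝ) - m)

lemma abs_gossezKernel_le (m n : ℕ) : |gossezKernel m n| ≤ 1 := by
  rcases Real.sign_apply_eq ((n : ℝ) - m) with h | h | h <;> simp [gossezKernel, h]

lemma gossezKernel_swap (m n : ℕ) : gossezKernel n m = -gossezKernel m n := by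
  rw [gossezKernel, ← neg_sub, Real.sign_neg, gossezKernel]

lemma gossezKernel_mul (m n : ℕ) (a : ℝ) :
    gossezKernel m n * a = (if m < n then a else 0) - (if n < m then a else 0) := by
  rcases lt_trichotomy m n with h | rfl | h
  · simp [gossezKernel, h, h.not_gt, Real.sign_of_pos (sub_pos.2 (Nat.cast_lt.2 h))]
  · simp [gossezKernel, Real.sign_zero]
  · simp [gossezKernel, h, h.not_gt, Real.sign_of_neg (sub_neg.2 (Nat.cast_lt.2 h))]

lemma Gfun_eq_tsum_gossezKernel_mul (x : ell1) (m : ℕ) :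
    Gfun x m = ∑' n, gossezKernel m n * x n := by
  have hlow : ∑' n, (if n < m then x n else 0) = ∑ n ∈ Finset.range m, x n := by
    rw [tsum_eq_sum (s := Finset.range m) (by simp_all)]
    exact Finset.sum_congr rfl (by simp_all)
  simp_rw [gossezKernel_mul]
  rw [(lp.summable_ite_of_one x _).tsum_sub (lp.summable_ite_of_one x _), hlow, Gfun]

theorem gossez_operator_bounded_skew :
    ∃ G : ell1 →L[ℝ] ellInfty,
      (∀ (x : ell1) (m : ℕ), G x m = Gfun x m) ∧
      ∀ x : ell1, ∑' m, x m * G x m = 0 := by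
  exact ⟨lp.kernelOperator gossezKernel 1 abs_gossezKernel_le,
    fun x m => (Gfun_eq_tsum_gossezKernel_mul x m).symm,
    lp.tsum_mul_tsum_eq_zero_of_antisymm abs_gossezKernel_le gossezKernel_swap⟩
end
end

section
/- For all w, x ∈ ℓ¹, ⟨w, Gx⟩ = −⟨x, Gw⟩, where G is the Gossez operator. -/
noncomputable section
open scoped ENNReal
open Filter

/-! The operator `G` is the kernel `(m, n) ↦ sign (n - m)` applied to `x`. The kernel is bounded and
antisymmetric, so for `w, x ∈ ℓ¹` the double series `∑ w_m sign (n - m) x_n` converges absolutely;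
exchanging the roles of `m` and `n` flips its sign. -/

section AntisymmetricKernel

variable {ι κ : Type*}

lemma summable_prod_mul_kernel_mul {w : ι → ℝ} {x : κ → ℝ} {K : ι → κ → ℝ} {C : ℝ}
    (hw : Summable (‖w ·‖)) (hx : Summable (‖x ·‖)) (hK : ∀ i j, ‖K i j‖ ≤ C) :
    Summable fun p : ι × κ => w p.1 * K p.1 p.2 * x p.2 := by
  refine .of_norm_bounded ((hw.mul_norm hx).mul_left C) fun p => ?_
  rw [norm_mul, norm_mul, norm_mul]
  calc ‖w p.1‖ * ‖K p.1 p.2‖ * ‖x p.2‖ = ‖K p.1 p.2‖ * (‖w p.1‖ * ‖x p.2‖) := by ring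
    _ ≤ C * (‖w p.1‖ * ‖x p.2‖) := by gcongr; exact hK _ _

lemma tsum_mul_tsum_kernel_eq_tsum_prod {w : ι → ℝ} {x : κ → ℝ} {K : ι → κ → ℝ} {C : ℝ}
    (hw : Summable (‖w ·‖)) (hx : Summable (‖x ·‖)) (hK : ∀ i j, ‖K i j‖ ≤ C) :
    ∑' i, w i * ∑' j, K i j * x j = ∑' p : ι × κ, w p.1 * K p.1 p.2 * x p.2 := by
  rw [(summable_prod_mul_kernel_mul hw hx hK).tsum_prod]
  simp only [← tsum_mul_left, mul_assoc]

theorem tsum_mul_tsum_kernel_eq_neg_of_antisymm {w x : ι → ℝ} {K : ι → ι → ℝ} {C : ℝ}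
    (hw : Summable (‖w ·‖)) (hx : Summable (‖x ·‖)) (hK : ∀ i j, ‖K i j‖ ≤ C)
    (hanti : ∀ i j, K j i = -K i j) :
    ∑' i, w i * ∑' j, K i j * x j = -∑' i, x i * ∑' j, K i j * w j := by
  rw [tsum_mul_tsum_kernel_eq_tsum_prod hw hx hK, tsum_mul_tsum_kernel_eq_tsum_prod hx hw hK,
    ← (Equiv.prodComm ι ι).tsum_eq, ← tsum_neg]
  congr 1 with p
  simp only [Equiv.prodComm_apply, Prod.fst_swap, Prod.snd_swap, hanti p.2 p.1]
  ring

end AntisymmetricKernel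

lemma Gfun_eq_tsum_sign {x : ℕ → ℝ} (hx : Summable x) (m : ℕ) :
    Gfun x m = ∑' n : ℕ, Real.sign ((n : ℝ) - m) * x n := by
  have hupper : Summable fun n => if m < n then x n else 0 :=
    (hx.indicator {n | m < n}).congr fun n => by simp [Set.indicator_apply]
  have hlower : ∑' n, (if n < m then x n else 0) = ∑ n ∈ Finset.range m, x n := by
    rw [tsum_eq_sum (s := Finset.range m) fun n hn => by simp_all]
    exact Finset.sum_congr rfl fun n hn => by simp_all
  have hlower_summable : Summable fun n => if n < m then x n else 0 :=
    summable_of_ne_finset_zero (s := Finset.range m) fun n hn => by simp_all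
  rw [Gfun, ← hlower, ← hupper.tsum_sub hlower_summable]
  congr 1 with n
  rcases lt_trichotomy m n with h | rfl | h
  · simp [h, h.not_gt, Real.sign_of_pos]
  · simp
  · simp [h, h.not_gt, Real.sign_of_neg]

lemma Real.norm_sign_le_one (r : ℝ) : ‖Real.sign r‖ ≤ 1 := by
  rcases Real.sign_apply_eq r with h | h | h <;> simp [h]

lemma ell1.summable_norm (x : ell1) : Summable (‖x ·‖) := by
  simpa using (lp.memℓp x).summable (by norm_num)

theorem gossez_skew_pairing (w x : ell1) :
    ∑' m, w m * Gfun x m = - ∑' m, x m * Gfun w m := by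
  simp only [Gfun_eq_tsum_sign (ell1.summable_norm _).of_norm]
  refine tsum_mul_tsum_kernel_eq_neg_of_antisymm (ell1.summable_norm w) (ell1.summable_norm x)
    (fun _ _ => Real.norm_sign_le_one _) fun m n => ?_
  rw [← neg_sub, Real.sign_neg]
end
end

section
/- Let x₀** ∈ (ℓ∞)* be a norm-one Hahn–Banach extension of the limit functional on c. Then G* x₀** = −e*, where e* = (1,1,1,…) ∈ ℓ∞, and consequently ⟨G* x₀**, x₀**⟩ = −1. -/
noncomputable section
open scoped ENNReal
open Filter

/-!
For `x ∈ ℓ¹` the sequence `G x` converges in the ordinary sense: its tail part `Σ_{n>m} x_n`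
tends to `0` and its head part `Σ_{n<m} x_n` to `Σ x_n`, so `G x → -Σ x_n = ⟨x, -e*⟩`.
Any functional extending `lim` therefore sends `G x` to `⟨x, -e*⟩`, i.e. `G* x₀** = -e*`,
and it sends the constant sequence `-e*` to `-1`.
-/

open Finset Topology

theorem hasSum_ite_lt {α : Type*} [AddCommGroup α] [TopologicalSpace α] [IsTopologicalAddGroup α]
    {f : ℕ → α} {a : α} (hf : HasSum f a) (m : ℕ) :
    HasSum (fun n => if m < n then f n else 0) (a - ∑ n ∈ range (m + 1), f n) := by
  have hhead : HasSum (fun n => if n ∈ range (m + 1) then f n else 0)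
      (∑ n ∈ range (m + 1), f n) := by
    convert hasSum_sum_of_ne_finset_zero (L := .unconditional ℕ) fun n hn => if_neg hn using 1
    exact (sum_congr rfl fun n hn => if_pos hn).symm
  convert hf.sub hhead using 2 with n
  by_cases h : m < n
  · simp [h, not_le.mpr h]
  · simp [h, not_lt.mp h]

theorem tendsto_Gfun {x : ℕ → ℝ} (hx : Summable x) :
    Tendsto (Gfun x) atTop (𝓝 (-∑' n, x n)) := by
  have hpartial : Tendsto (fun m => ∑ n ∈ range m, x n) atTop (𝓝 (∑' n, x n)) :=
    hx.hasSum.tendsto_sum_nat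
  have hGfun : Gfun x = fun m =>
      (∑' n, x n - ∑ n ∈ range (m + 1), x n) - ∑ n ∈ range m, x n := by
    funext m
    rw [Gfun, (hasSum_ite_lt hx.hasSum m).tsum_eq]
  have hlimit := ((tendsto_const_nhds (x := ∑' n, x n)).sub
    (hpartial.comp (tendsto_add_atTop_nat 1))).sub hpartial
  rw [sub_self, zero_sub] at hlimit
  exact hGfun ▸ hlimit

theorem gossez_adjoint_at_limit_functional_general
    (G : ell1 →L[ℝ] ellInfty) (hG : ∀ (x : ell1) (m : ℕ), G x m = Gfun x m)
    (x0 : StrongDual ℝ ellInfty)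
    (hlim : ∀ (xs : ellInfty) (L : ℝ),
      Tendsto (fun m => xs m) atTop (nhds L) → x0 xs = L) :
    (∀ x : ell1, x0 (G x) = ∑' m, x m * (-eStar m)) ∧ x0 (-eStar) = -1 := by
  have hGx (x : ell1) : x0 (G x) = -∑' n, x n :=
    hlim _ _ <| by simpa only [hG] using tendsto_Gfun (lp.memℓp x).summable_of_one
  have heStar (m : ℕ) : eStar m = 1 := rfl
  refine ⟨fun x => by simp [hGx, heStar, tsum_neg], hlim _ _ ?_⟩
  simp [heStar]

theorem gossez_adjoint_at_limit_functional
    (G : ell1 →L[ℝ] ellInfty) (hG : ∀ (x : ell1) (m : ℕ), G x m = Gfun x m)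
    (x0 : StrongDual ℝ ellInfty) (hnorm : ‖x0‖ = 1)
    (hlim : ∀ (xs : ellInfty) (L : ℝ),
      Tendsto (fun m => xs m) atTop (nhds L) → x0 xs = L) :
    (∀ x : ell1, x0 (G x) = ∑' m, x m * (-eStar m)) ∧ x0 (-eStar) = -1 :=
  gossez_adjoint_at_limit_functional_general G hG x0 hlim
end
end

section
/- Let λ > 0 and let k ≥ 1. If u* ∈ ℓ∞ satisfies u*_1 = −k + 2λk, u*_2 = −k − 2λk, and |u*_m| ≤ 2λk for all m ≥ 3, then u* ∈ (G + λJ)(k e₁ − k e₂), where e₁, e₂ are the first two standard unit vectors of ℓ¹. -/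
noncomputable section
open scoped ENNReal
open Filter

/-- The element k e₁ − k e₂ of ℓ¹. -/
def xk (k : ℝ) : ell1 := k • lp.single 1 0 (1 : ℝ) - k • lp.single 1 1 (1 : ℝ)

/-! The dual element is forced: `x* = (u* - G x) / λ`. Off the support `{0, 1}` of `x` the
sequence `G x` vanishes, so `|x*_m| ≤ 2k` there by hypothesis, while `x*_0 = 2k = -x*_1`;
hence `‖x*‖∞ = 2k = ‖x‖₁` and `⟨x, x*⟩ = 4k² = ‖x‖₁²`. -/

theorem tsum_eq_add_of_forall_two_le {α : Type*} [AddCommMonoid α] [TopologicalSpace α]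
    {f : ℕ → α} (hf : ∀ n, 2 ≤ n → f n = 0) : ∑' n, f n = f 0 + f 1 := by
  rw [tsum_eq_sum (s := Finset.range 2) fun n hn => hf n (by simp at hn; omega)]
  simp [Finset.sum_range_succ]

theorem lp.norm_eq_of_forall_norm_le {ι : Type*} {E : ι → Type*}
    [∀ i, NormedAddCommGroup (E i)] (f : lp E ∞) {C : ℝ} (hf : ∀ i, ‖f i‖ ≤ C) (i₀ : ι)
    (hi₀ : ‖f i₀‖ = C) : ‖f‖ = C :=
  le_antisymm (lp.norm_le_of_forall_le (hi₀ ▸ norm_nonneg _) hf)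
    (hi₀ ▸ lp.norm_apply_le_norm ENNReal.top_ne_zero f i₀)

theorem xk_apply (k : ℝ) (n : ℕ) :
    xk k n = if n = 0 then k else if n = 1 then -k else 0 := by
  rw [xk, lp.coeFn_sub, lp.coeFn_smul, lp.coeFn_smul]
  rcases n with _ | _ | n <;> simp [lp.single_apply]

theorem xk_apply_of_two_le (k : ℝ) {n : ℕ} (hn : 2 ≤ n) : xk k n = 0 := by
  rw [xk_apply, if_neg (by omega), if_neg (by omega)]

theorem norm_xk (k : ℝ) : ‖xk k‖ = 2 * |k| := by
  rw [lp.norm_eq_tsum_rpow (by norm_num), tsum_eq_add_of_forall_two_le fun n hn => by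
    simp [xk_apply_of_two_le k hn]]
  simp [xk_apply, two_mul]

theorem tsum_xk_mul (k : ℝ) (g : ℕ → ℝ) : ∑' m, xk k m * g m = k * (g 0 - g 1) := by
  rw [tsum_eq_add_of_forall_two_le fun n hn => by simp [xk_apply_of_two_le k hn]]
  simp [xk_apply, mul_add, sub_eq_add_neg]

theorem Gfun_xk (k : ℝ) (m : ℕ) : Gfun (xk k) m = if m ≤ 1 then -k else 0 := by
  rw [Gfun, tsum_eq_add_of_forall_two_le fun n hn => by simp [xk_apply_of_two_le k hn]]
  rcases m with _ | _ | m <;> simp [xk_apply, Finset.sum_range_succ']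

theorem gossez_range_element (lam : ℝ) (hlam : 0 < lam) (k : ℝ) (hk : 1 ≤ k)
    (u : ellInfty)
    (h1 : u 0 = -k + 2 * lam * k) (h2 : u 1 = -k - 2 * lam * k)
    (h3 : ∀ m : ℕ, 2 ≤ m → |u m| ≤ 2 * lam * k) :
    ∃ xs : ellInfty,
      ‖xs‖ = ‖xk k‖ ∧
      (∑' m, (xk k) m * xs m = ‖xk k‖ ^ 2) ∧
      ∀ m : ℕ, u m = Gfun (xk k) m + lam * xs m := by
  have hk0 : 0 ≤ k := zero_le_one.trans hk
  obtain ⟨f, hf⟩ : ∃ f : ℕ → ℝ, ∀ m, lam * f m = u m - Gfun (xk k) m :=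
    ⟨fun m => (u m - Gfun (xk k) m) / lam, fun m => mul_div_cancel₀ _ hlam.ne'⟩
  have hf0 : f 0 = 2 * k :=
    mul_left_cancel₀ hlam.ne' (by rw [hf, h1, Gfun_xk, if_pos zero_le_one]; ring)
  have hf1 : f 1 = -(2 * k) :=
    mul_left_cancel₀ hlam.ne' (by rw [hf, h2, Gfun_xk, if_pos le_rfl]; ring)
  have hf_le : ∀ m, ‖f m‖ ≤ 2 * k := by
    rintro (_ | _ | m)
    · simp [hf0, abs_of_nonneg hk0]
    · simp [hf1, abs_of_nonneg hk0]
    · have hm : lam * f (m + 2) = u (m + 2) := by rw [hf, Gfun_xk, if_neg (by omega), sub_zero]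
      refine le_of_mul_le_mul_left ?_ hlam
      calc lam * ‖f (m + 2)‖ = |u (m + 2)| := by rw [← hm, abs_mul, abs_of_pos hlam]; rfl
        _ ≤ 2 * lam * k := h3 (m + 2) (by omega)
        _ = lam * (2 * k) := by ring
  let xs : ellInfty := ⟨f, memℓp_infty ⟨2 * k, by rintro _ ⟨m, rfl⟩; exact hf_le m⟩⟩
  have hxs : ∀ m, xs m = f m := fun _ => rfl
  refine ⟨xs, ?_, ?_, fun m => ?_⟩
  · rw [norm_xk, abs_of_nonneg hk0]
    exact lp.norm_eq_of_forall_norm_le xs (by simpa only [hxs]) 0 (by simp [hxs, hf0, hk0])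
  · rw [tsum_xk_mul, hxs, hxs, hf0, hf1, norm_xk, abs_of_nonneg hk0]
    ring
  · linarith [hf m, hxs m]
end
end

section
/- Let λ > 0 and suppose the norm closure of the range of G + λJ in ℓ∞ is convex, where G is the Gossez operator and J the duality map of ℓ¹. Then the closure of the range of G + λJ equals all of ℓ∞. -/
noncomputable section
open scoped ENNReal
open Filter

/-!
The duality map of `ℓ¹` is far from single-valued: for `x = c eᵢ` every `x*` with `x*ᵢ = c` and
`‖x*‖∞ ≤ |c|` lies in `Jx`. Since `G(c eᵢ) + G(-c eᵢ) = 0`, the midpoint of a point of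
`(G + λJ)(c eᵢ)` and one of `(G + λJ)(-c eᵢ)` is `λv` for an arbitrary `v` with `vᵢ = 0` and
`‖v‖∞ ≤ |c|`. So any convex set containing the range contains the hyperplanes `{vᵢ = 0}`, hence
also `{v₀ = 0} + {v₁ = 0} = ℓ∞`.
-/

lemma Convex.eq_univ_of_sup_eq_top {E : Type*} [AddCommGroup E] [Module ℝ E] {C : Set E}
    (hC : Convex ℝ C) {p q : Submodule ℝ E} (hpq : p ⊔ q = ⊤) (hp : (p : Set E) ⊆ C)
    (hq : (q : Set E) ⊆ C) : C = Set.univ := by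
  refine Set.eq_univ_of_forall fun y => ?_
  obtain ⟨a, ha, b, hb, rfl⟩ := Submodule.mem_sup.1 (hpq ▸ Submodule.mem_top : y ∈ p ⊔ q)
  convert hC (hp (p.smul_mem 2 ha)) (hq (q.smul_mem 2 hb)) (a := 1 / 2) (b := 1 / 2)
    (by norm_num) (by norm_num) (by norm_num) using 1
  module

lemma eVec_apply (i m : ℕ) : eVec i m = if m = i then 1 else 0 := by
  simp [eVec, Pi.single_apply]

lemma ker_evalₗ_sup_ker_evalₗ {i j : ℕ} (hij : i ≠ j) :
    LinearMap.ker (lp.evalₗ (𝕜 := ℝ) (fun _ : ℕ => ℝ) ∞ i) ⊔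
      LinearMap.ker (lp.evalₗ (𝕜 := ℝ) (fun _ : ℕ => ℝ) ∞ j) = ⊤ := by
  refine eq_top_iff.2 fun y _ => Submodule.mem_sup.2
    ⟨y - y i • eVec i, ?_, y i • eVec i, ?_, sub_add_cancel y _⟩ <;>
    simp only [LinearMap.mem_ker, lp.evalₗ_apply, lp.coeFn_sub, lp.coeFn_smul, Pi.sub_apply,
      Pi.smul_apply, smul_eq_mul, eVec_apply, if_neg hij.symm] <;>
    simp

lemma add_smul_eVec_apply {v : ellInfty} {i : ℕ} (hvi : v i = 0) (c : ℝ) (m : ℕ) :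
    (v + c • eVec i) m = if m = i then c else v m := by
  simp only [lp.coeFn_add, lp.coeFn_smul, Pi.add_apply, Pi.smul_apply, smul_eq_mul, eVec_apply]
  split_ifs with hm
  · simp [hm, hvi]
  · simp

lemma norm_add_smul_eVec {v : ellInfty} {i : ℕ} (hvi : v i = 0) {c : ℝ} (hv : ‖v‖ ≤ |c|) :
    ‖v + c • eVec i‖ = |c| := by
  refine le_antisymm (lp.norm_le_of_forall_le (abs_nonneg c) fun m => ?_) ?_
  · rw [add_smul_eVec_apply hvi]
    split_ifs
    · exact (Real.norm_eq_abs c).le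
    · exact (lp.norm_apply_le_norm ENNReal.top_ne_zero v m).trans hv
  · simpa [add_smul_eVec_apply hvi] using
      lp.norm_apply_le_norm ENNReal.top_ne_zero (v + c • eVec i) i

lemma norm_single_one (i : ℕ) (c : ℝ) : ‖(lp.single 1 i c : ell1)‖ = |c| := by
  rw [lp.norm_single (by norm_num), Real.norm_eq_abs]

lemma tsum_single_mul_add_smul_eVec {v : ellInfty} {i : ℕ} (hvi : v i = 0) (c : ℝ) :
    ∑' m, (lp.single 1 i c : ell1) m * (v + c • eVec i) m = |c| ^ 2 := by
  rw [tsum_eq_single i fun m hm => by simp [hm], sq_abs, add_smul_eVec_apply hvi, if_pos rfl,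
    lp.single_apply_self, sq]

lemma ker_evalₗ_subset_of_convex (G : ell1 →ₗ[ℝ] ellInfty) {lam : ℝ} (hlam : lam ≠ 0)
    {C : Set ellInfty} (hC : Convex ℝ C)
    (hGJ : ∀ (x : ell1) (xs : ellInfty), ‖xs‖ = ‖x‖ → ∑' m, x m * xs m = ‖x‖ ^ 2 →
      G x + lam • xs ∈ C) (i : ℕ) :
    (LinearMap.ker (lp.evalₗ (𝕜 := ℝ) (fun _ : ℕ => ℝ) ∞ i) : Set ellInfty) ⊆ C := by
  rintro v hv
  obtain ⟨u, rfl⟩ : ∃ u, v = lam • u := ⟨lam⁻¹ • v, (smul_inv_smul₀ hlam v).symm⟩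
  have hui : u i = 0 := by simpa [hlam] using hv
  have hmem : ∀ c, ‖u‖ ≤ |c| → G (lp.single 1 i c) + lam • (u + c • eVec i) ∈ C := fun c hc =>
    hGJ _ _ (by rw [norm_add_smul_eVec hui hc, norm_single_one])
      (by rw [tsum_single_mul_add_smul_eVec hui, norm_single_one])
  have hmid := hC (hmem ‖u‖ (le_abs_self _)) (hmem (-‖u‖) (by rw [abs_neg]; exact le_abs_self _))
    (a := 1 / 2) (b := 1 / 2) (by norm_num) (by norm_num) (by norm_num)
  rw [lp.single_neg, map_neg] at hmid
  convert hmid using 1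
  module

theorem gossez_closure_convex_imp_full_general
    (G : ell1 →L[ℝ] ellInfty)
    (lam : ℝ) (hlam : 0 < lam)
    (hconv : Convex ℝ (closure {y : ellInfty | ∃ (x : ell1) (xs : ellInfty),
        ‖xs‖ = ‖x‖ ∧ (∑' m, x m * xs m = ‖x‖ ^ 2) ∧ y = G x + lam • xs})) :
    closure {y : ellInfty | ∃ (x : ell1) (xs : ellInfty),
        ‖xs‖ = ‖x‖ ∧ (∑' m, x m * xs m = ‖x‖ ^ 2) ∧ y = G x + lam • xs} = Set.univ := by
  have hker (i : ℕ) := ker_evalₗ_subset_of_convex G.toLinearMap hlam.ne' hconv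
    (fun x xs hnorm hpair => subset_closure ⟨x, xs, hnorm, hpair, rfl⟩) i
  exact hconv.eq_univ_of_sup_eq_top (ker_evalₗ_sup_ker_evalₗ zero_ne_one) (hker 0) (hker 1)

theorem gossez_closure_convex_imp_full
    (G : ell1 →L[ℝ] ellInfty) (hG : ∀ (x : ell1) (m : ℕ), G x m = Gfun x m)
    (lam : ℝ) (hlam : 0 < lam)
    (hconv : Convex ℝ (closure {y : ellInfty | ∃ (x : ell1) (xs : ellInfty),
        ‖xs‖ = ‖x‖ ∧ (∑' m, x m * xs m = ‖x‖ ^ 2) ∧ y = G x + lam • xs})) :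
    closure {y : ellInfty | ∃ (x : ell1) (xs : ellInfty),
        ‖xs‖ = ‖x‖ ∧ (∑' m, x m * xs m = ‖x‖ ^ 2) ∧ y = G x + lam • xs} = Set.univ :=
  gossez_closure_convex_imp_full_general G lam hlam hconv
end
end

section
/- Let w*** := ê* − W*e* ∈ (ℓ¹)***, where e* = (1,1,1,…) ∈ ℓ∞, ê* its canonical image in (ℓ∞)**, and W* the adjoint of W : (ℓ∞)* → ℓ¹. Then ‖w***‖ = 1. -/
noncomputable section
open scoped ENNReal
open Filter

/-! Upper bound: `w***(x**)` is the limit of `x**(e* - Σ_{m ∈ s} e*_m)` over finite sets `s`, and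
these vectors have sup norm at most one; the series `Σ x**(e*_m)` converges absolutely since
`Σ_{m ∈ s} |x**(e*_m)| = x**(Σ_{m ∈ s} ±e*_m) ≤ ‖x**‖`.
Lower bound: the limit along a free ultrafilter (playing the role of a Hahn–Banach extension of
`lim` from `c`) is a functional of norm at most one, equal to `1` at `e*` and to `0` at every
`e*_m`, so `w***` takes the value `1` on it. -/

open Topology

section Ultralimit

variable {ι : Type*}

lemma exists_tendsto_ultrafilter (U : Ultrafilter ι) (f : lp (fun _ : ι => ℝ) ∞) :
    ∃ a, Tendsto f U (𝓝 a) := by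
  have hf : ∀ i, f i ∈ Metric.closedBall (0 : ℝ) ‖f‖ := fun i => by
    simpa using lp.norm_apply_le_norm ENNReal.top_ne_zero f i
  obtain ⟨a, -, ha⟩ := (isCompact_closedBall (0 : ℝ) ‖f‖).ultrafilter_le_nhds (U.map f)
    (by simp only [Ultrafilter.coe_map, le_principal_iff, mem_map]; exact univ_mem' hf)
  exact ⟨a, ha⟩

def ultrafilterLim (U : Ultrafilter ι) : StrongDual ℝ (lp (fun _ : ι => ℝ) ∞) :=
  LinearMap.mkContinuous
    { toFun := fun f => limUnder (U : Filter ι) f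
      map_add' := fun f g => tendsto_nhds_unique
        (tendsto_nhds_limUnder (exists_tendsto_ultrafilter U (f + g)))
        ((tendsto_nhds_limUnder (exists_tendsto_ultrafilter U f)).add
          (tendsto_nhds_limUnder (exists_tendsto_ultrafilter U g)))
      map_smul' := fun c f => tendsto_nhds_unique
        (tendsto_nhds_limUnder (exists_tendsto_ultrafilter U (c • f)))
        ((tendsto_nhds_limUnder (exists_tendsto_ultrafilter U f)).const_mul c) }
    1 fun f => by
      simpa using le_of_tendsto (tendsto_nhds_limUnder (exists_tendsto_ultrafilter U f)).norm
        (Eventually.of_forall (lp.norm_apply_le_norm ENNReal.top_ne_zero f))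

lemma norm_ultrafilterLim_le (U : Ultrafilter ι) : ‖ultrafilterLim U‖ ≤ 1 :=
  LinearMap.mkContinuous_norm_le _ zero_le_one _

lemma ultrafilterLim_apply_of_tendsto {U : Ultrafilter ι} {f : lp (fun _ : ι => ℝ) ∞} {a : ℝ}
    (h : Tendsto f U (𝓝 a)) : ultrafilterLim U f = a :=
  tendsto_nhds_unique (tendsto_nhds_limUnder (exists_tendsto_ultrafilter U f)) h

end Ultralimit

section SingleSums

variable {ι : Type*} [DecidableEq ι]

lemma lp.coe_sum_single (s : Finset ι) (c : ι → ℝ) :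
    ⇑(∑ i ∈ s, lp.single ∞ i (c i)) = fun k => if k ∈ s then c k else 0 := by
  ext k
  rw [lp.coeFn_sum, Finset.sum_apply]
  exact Finset.sum_pi_single k c s

lemma lp.norm_sum_single_le_one (s : Finset ι) {c : ι → ℝ} (hc : ∀ i, |c i| ≤ 1) :
    ‖∑ i ∈ s, lp.single ∞ i (c i)‖ ≤ 1 := by
  refine lp.norm_le_of_forall_le zero_le_one fun k => ?_
  rw [lp.coe_sum_single]
  dsimp only
  split_ifs
  · exact hc k
  · simp

lemma apply_lp_single (f : StrongDual ℝ (lp (fun _ : ι => ℝ) ∞)) (i : ι) (c : ℝ) :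
    f (lp.single ∞ i c) = c * f (lp.single ∞ i 1) := by
  rw [← smul_eq_mul, ← map_smul, ← lp.single_smul, smul_eq_mul, mul_one]

lemma sum_abs_apply_single_le (f : StrongDual ℝ (lp (fun _ : ι => ℝ) ∞)) (s : Finset ι) :
    ∑ i ∈ s, |f (lp.single ∞ i 1)| ≤ ‖f‖ :=
  calc ∑ i ∈ s, |f (lp.single ∞ i 1)|
      = f (∑ i ∈ s, lp.single ∞ i (SignType.sign (f (lp.single ∞ i 1)) : ℝ)) := by
        simp only [map_sum, apply_lp_single f _ (SignType.sign _ : ℝ), sign_mul_self]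
    _ ≤ ‖f‖ * 1 := (le_abs_self _).trans <| f.le_of_opNorm_le_of_le le_rfl <|
        lp.norm_sum_single_le_one s fun i => by
          cases SignType.sign (f (lp.single ∞ i 1)) <;> simp
    _ = ‖f‖ := mul_one _

lemma summable_apply_single (f : StrongDual ℝ (lp (fun _ : ι => ℝ) ∞)) :
    Summable fun i => f (lp.single ∞ i 1) :=
  (summable_of_sum_le (fun _ => abs_nonneg _) (sum_abs_apply_single_le f)).of_abs

end SingleSums

lemma norm_eStar_sub_sum_eVec_le (s : Finset ℕ) : ‖eStar - ∑ m ∈ s, eVec m‖ ≤ 1 := by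
  refine lp.norm_le_of_forall_le zero_le_one fun k => ?_
  rw [lp.coeFn_sub, Pi.sub_apply]
  unfold eVec
  rw [lp.coe_sum_single s fun _ => 1]
  dsimp only [eStar]
  split_ifs <;> simp

lemma abs_apply_eStar_sub_tsum_le (f : StrongDual ℝ ellInfty) :
    |f eStar - ∑' m, f (eVec m)| ≤ ‖f‖ := by
  have partial_le (s : Finset ℕ) : |f eStar - ∑ m ∈ s, f (eVec m)| ≤ ‖f‖ := by
    rw [← map_sum, ← map_sub, ← Real.norm_eq_abs]
    exact f.le_of_opNorm_le_of_le le_rfl (norm_eStar_sub_sum_eVec_le s) |>.trans_eq (mul_one _)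
  exact le_of_tendsto
    (tendsto_const_nhds.sub (summable_apply_single f).hasSum).abs
    (Eventually.of_forall partial_le)

lemma ultrafilterLim_hyperfilter_eStar : ultrafilterLim (hyperfilter ℕ) eStar = 1 :=
  ultrafilterLim_apply_of_tendsto tendsto_const_nhds

lemma ultrafilterLim_hyperfilter_eVec (m : ℕ) : ultrafilterLim (hyperfilter ℕ) (eVec m) = 0 :=
  ultrafilterLim_apply_of_tendsto <| tendsto_const_nhds.congr' <|
    Eventually.mono (hyperfilter_le_cofinite (eventually_cofinite_ne m)) fun _ hn =>
      (lp.single_apply_ne (E := fun _ : ℕ => ℝ) ∞ m 1 hn).symm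

theorem wtriple_norm_one
    (w : StrongDual ℝ (StrongDual ℝ ellInfty))
    (hw : ∀ xss : StrongDual ℝ ellInfty,
      w xss = xss eStar - ∑' m, xss (eVec m)) :
    ‖w‖ = 1 := by
  refine le_antisymm (w.opNorm_le_bound zero_le_one fun f => ?_) ?_
  · rw [hw, one_mul, Real.norm_eq_abs]
    exact abs_apply_eStar_sub_tsum_le f
  · have hwL : w (ultrafilterLim (hyperfilter ℕ)) = 1 := by
      simp [hw, ultrafilterLim_hyperfilter_eStar, ultrafilterLim_hyperfilter_eVec]
    calc 1 = ‖w (ultrafilterLim (hyperfilter ℕ))‖ := by rw [hwL, norm_one]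
      _ ≤ ‖w‖ * 1 := w.le_of_opNorm_le_of_le le_rfl (norm_ultrafilterLim_le _)
      _ = ‖w‖ := mul_one _
end
end

section
/- For every x** ∈ (ℓ∞)* = (ℓ¹)**, the adjoint of the Gossez operator satisfies G* x** = −G(W x**) − w***(x**) · e* in ℓ∞. -/
noncomputable section
open scoped ENNReal
open Filter

/-! Expanding `x ∈ ℓ¹` in the unit vectors, `x** (G x) = ∑ₙ xₙ · x** (G eₙ)`, and
`G eₙ = ∑_{k<n} e*ₖ + ∑_{k≤n} e*ₖ - e*` takes the values `1, 0, -1` on `m < n`, `m = n`, `m > n`.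
So `x** (G eₙ) = ∑_{k<n} cₖ + ∑_{k≤n} cₖ - x** e*` with `cₖ = x** (e*ₖ)`, which is the claimed
coefficient once `(cₖ)` is known to be summable; summability holds because `x**` is bounded on
the sign patterns `∑_{k∈s} ±e*ₖ` of sup norm `1`. -/

open Finset

theorem tsum_ite_lt_eq_tsum_sub_sum {α : Type*} [AddCommGroup α] [TopologicalSpace α]
    [IsTopologicalAddGroup α] [T2Space α] {f : ℕ → α} (hf : Summable f) (m : ℕ) :
    ∑' n, (if m < n then f n else 0) = ∑' n, f n - ∑ n ∈ range (m + 1), f n := by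
  rw [← hf.sum_add_tsum_compl (s := range (m + 1)), add_sub_cancel_left, _root_.tsum_subtype]
  congr 1 with n
  simp [Set.indicator_apply]

theorem Gfun_of_summable {f : ℕ → ℝ} (hf : Summable f) (m : ℕ) :
    Gfun f m = ∑' n, f n - ∑ n ∈ range (m + 1), f n - ∑ n ∈ range m, f n := by
  rw [Gfun, tsum_ite_lt_eq_tsum_sub_sum hf]

theorem Gfun_single (n m : ℕ) :
    Gfun (Pi.single n 1) m = (if m < n then 1 else 0) - if n < m then 1 else 0 := by
  rw [Gfun_of_summable (summable_of_ne_finset_zero (s := {n}) (by simp_all)), tsum_pi_single,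
    sum_pi_single', sum_pi_single']
  split_ifs <;> simp_all <;> omega

theorem sum_eVec_apply (s : Finset ℕ) (m : ℕ) :
    (∑ k ∈ s, eVec k : ellInfty) m = if m ∈ s then 1 else 0 := by
  rw [lp.coeFn_sum, Finset.sum_apply]
  simp [eVec]

theorem gossez_apply_single (G : ell1 →L[ℝ] ellInfty)
    (hG : ∀ (x : ell1) (m : ℕ), G x m = Gfun x m) (n : ℕ) :
    G (lp.single 1 n 1) = ∑ k ∈ range n, eVec k + ∑ k ∈ range (n + 1), eVec k - eStar := by
  ext m
  rw [hG, lp.coeFn_single, Gfun_single, lp.coeFn_sub, lp.coeFn_add, Pi.sub_apply, Pi.add_apply,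
    sum_eVec_apply, sum_eVec_apply]
  simp only [mem_range]
  split_ifs <;> simp [eStar] <;> omega

theorem hasSum_apply_smul_single {α 𝕜 E : Type*} [DecidableEq α] [NontriviallyNormedField 𝕜]
    [NormedAddCommGroup E] [NormedSpace 𝕜 E] {p : ℝ≥0∞} [Fact (1 ≤ p)] (hp : p ≠ ∞)
    (T : lp (fun _ : α => 𝕜) p →L[𝕜] E) (x : lp (fun _ : α => 𝕜) p) :
    HasSum (fun a => x a • T (lp.single p a 1)) (T x) := by
  refine ((lp.hasSum_single hp x).map T T.continuous).congr_fun fun a => ?_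
  rw [Function.comp_apply, ← map_smul, ← lp.single_smul, smul_eq_mul, mul_one]

theorem summable_apply_single_of_strongDual {α : Type*} [DecidableEq α]
    (φ : StrongDual ℝ (lp (fun _ : α => ℝ) ∞)) : Summable fun a => φ (lp.single ∞ a 1) := by
  refine Summable.of_abs (summable_of_sum_le (c := ‖φ‖) (fun a => abs_nonneg _) fun s => ?_)
  set g : lp (fun _ : α => ℝ) ∞ :=
    ∑ a ∈ s, (SignType.sign (φ (lp.single ∞ a 1)) : ℝ) • lp.single ∞ a 1
  have hg : ‖g‖ ≤ 1 := by
    refine lp.norm_le_of_forall_le zero_le_one fun j => ?_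
    simp only [g, ← lp.single_smul, smul_eq_mul, mul_one, lp.coeFn_sum, lp.coeFn_single,
      Finset.sum_apply, Finset.sum_pi_single]
    split_ifs
    · cases SignType.sign (φ (lp.single ∞ j 1)) <;> simp
    · simp
  calc ∑ a ∈ s, |φ (lp.single ∞ a 1)| = φ g := by simp [g, map_sum]
    _ ≤ ‖φ‖ * ‖g‖ := (le_abs_self _).trans (φ.le_opNorm g)
    _ ≤ ‖φ‖ := mul_le_of_le_one_right (norm_nonneg _) hg

theorem gossez_adjoint_formula
    (G : ell1 →L[ℝ] ellInfty) (hG : ∀ (x : ell1) (m : ℕ), G x m = Gfun x m)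
    (xss : StrongDual ℝ ellInfty) :
    ∀ x : ell1, xss (G x) =
      ∑' m, x m *
        (-(Gfun (fun n => xss (eVec n)) m) - (xss eStar - ∑' n, xss (eVec n))) := by
  intro x
  have hc : Summable fun n => xss (eVec n) := summable_apply_single_of_strongDual xss
  calc xss (G x) = ∑' n, x n * xss (G (lp.single 1 n 1)) :=
        (hasSum_apply_smul_single ENNReal.one_ne_top (xss.comp G) x).tsum_eq.symm
    _ = _ := tsum_congr fun n => by
        rw [gossez_apply_single G hG n, Gfun_of_summable hc, map_sub, map_add, map_sum, map_sum,
          sum_range_succ]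
        ring
end
end

section
/- The map x** ↦ (W x**)^ is a bounded linear projection (retraction) from (ℓ¹)** onto the canonical image of ℓ¹ in (ℓ¹)**, of norm 1. -/
noncomputable section
open scoped ENNReal
open Filter

/-!
Evaluating a functional `φ` on `ℓ∞` at the unit vectors gives a sequence in `ℓ¹` of norm at most
`‖φ‖`: on a finite set of indices, test `φ` against the vector of signs of its values there. This
coefficient map `W` is a contraction `(ℓ∞)* → ℓ¹` and a left inverse of the canonical contraction
`ι : ℓ¹ → (ℓ∞)*`, so `ι ∘ W` is an idempotent of norm at most `1` with the same range as `ι`; a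
nonzero idempotent has norm at least `1`.
-/

theorem one_le_norm_of_isIdempotentElem {R : Type*} [NormedRing R] {p : R}
    (hp : IsIdempotentElem p) (hp₀ : p ≠ 0) : 1 ≤ ‖p‖ := by
  have hpos : 0 < ‖p‖ := norm_pos_iff.mpr hp₀
  have h : ‖p‖ ≤ ‖p‖ * ‖p‖ := by simpa only [hp.eq] using norm_mul_le p p
  nlinarith

namespace lp

variable {α : Type*}

def oneToDualInfty : lp (fun _ : α => ℝ) 1 →L[ℝ] StrongDual ℝ (lp (fun _ : α => ℝ) ∞) :=
  lp.dualPairing 1 ∞ (fun _ => ContinuousLinearMap.mul ℝ ℝ) (K := 1)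
    fun _ => ContinuousLinearMap.opNorm_mul_le ℝ ℝ

theorem oneToDualInfty_apply (x : lp (fun _ : α => ℝ) 1) (y : lp (fun _ : α => ℝ) ∞) :
    oneToDualInfty x y = ∑' i, x i * y i :=
  rfl

theorem norm_oneToDualInfty_le : ‖oneToDualInfty (α := α)‖ ≤ 1 :=
  lp.norm_dualPairing ..

variable [DecidableEq α]

theorem oneToDualInfty_apply_single (x : lp (fun _ : α => ℝ) 1) (i : α) :
    oneToDualInfty x (lp.single ∞ i 1) = x i := by
  rw [oneToDualInfty_apply, tsum_eq_single i] <;> simp +contextual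

theorem sum_abs_apply_single_le_opNorm (φ : StrongDual ℝ (lp (fun _ : α => ℝ) ∞))
    (s : Finset α) : ∑ i ∈ s, |φ (lp.single ∞ i 1)| ≤ ‖φ‖ := by
  set c : α → ℝ := fun i => SignType.sign (φ (lp.single ∞ i 1))
  set y : lp (fun _ : α => ℝ) ∞ := ∑ i ∈ s, lp.single ∞ i (c i)
  have hy : ‖y‖ ≤ 1 := by
    refine lp.norm_le_of_forall_le zero_le_one fun j => ?_
    simp only [y, lp.coeFn_sum, Finset.sum_apply, lp.single_apply, Finset.sum_pi_single]
    split_ifs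
    · simp only [Real.norm_eq_abs, c]
      cases SignType.sign (φ (lp.single ∞ j 1)) <;> simp
    · simp
  have hφy : φ y = ∑ i ∈ s, |φ (lp.single ∞ i 1)| := by
    simp only [y, map_sum]
    refine Finset.sum_congr rfl fun i _ => ?_
    rw [← sign_mul_self, ← smul_eq_mul, ← map_smul, ← lp.single_smul, smul_eq_mul, mul_one]
  calc ∑ i ∈ s, |φ (lp.single ∞ i 1)| = φ y := hφy.symm
    _ ≤ ‖φ‖ * ‖y‖ := (le_abs_self _).trans (φ.le_opNorm y)
    _ ≤ ‖φ‖ := mul_le_of_le_one_right (norm_nonneg φ) hy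

theorem memℓp_one_apply_single (φ : StrongDual ℝ (lp (fun _ : α => ℝ) ∞)) :
    Memℓp (fun i => φ (lp.single ∞ i 1)) 1 :=
  memℓp_gen <| summable_of_sum_le (fun _ => by positivity) fun s => by
    simpa using sum_abs_apply_single_le_opNorm φ s

def dualInftyToOne : StrongDual ℝ (lp (fun _ : α => ℝ) ∞) →L[ℝ] lp (fun _ : α => ℝ) 1 :=
  LinearMap.mkContinuous
    { toFun φ := ⟨fun i => φ (lp.single ∞ i 1), memℓp_one_apply_single φ⟩
      map_add' _ _ := rfl
      map_smul' _ _ := rfl }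
    1 fun φ => by
      rw [one_mul]
      refine lp.norm_le_of_forall_sum_le (by simp) (norm_nonneg φ) fun s => ?_
      simp only [ENNReal.toReal_one, Real.rpow_one, Real.norm_eq_abs]
      exact sum_abs_apply_single_le_opNorm φ s

@[simp]
theorem dualInftyToOne_apply (φ : StrongDual ℝ (lp (fun _ : α => ℝ) ∞)) (i : α) :
    dualInftyToOne φ i = φ (lp.single ∞ i 1) :=
  rfl

theorem norm_dualInftyToOne_le : ‖dualInftyToOne (α := α)‖ ≤ 1 :=
  LinearMap.mkContinuous_norm_le _ zero_le_one _

theorem leftInverse_dualInftyToOne_oneToDualInfty :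
    Function.LeftInverse (dualInftyToOne (α := α)) oneToDualInfty := fun x => by
  ext i
  simp [oneToDualInfty_apply_single]

end lp

theorem retraction_onto_ell1 :
    ∃ P : StrongDual ℝ ellInfty →L[ℝ] StrongDual ℝ ellInfty,
      (∀ (xss : StrongDual ℝ ellInfty) (xs : ellInfty),
        P xss xs = ∑' m, xss (eVec m) * xs m) ∧
      ‖P‖ = 1 ∧
      (∀ xss, P (P xss) = P xss) ∧
      Set.range P = {xhat : StrongDual ℝ ellInfty |
        ∃ x : ell1, ∀ xs : ellInfty, xhat xs = ∑' m, x m * xs m} := by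
  have hι_single := lp.oneToDualInfty_apply_single (α := ℕ)
  set ι := lp.oneToDualInfty (α := ℕ)
  set W := lp.dualInftyToOne (α := ℕ)
  have hWι : Function.LeftInverse W ι := lp.leftInverse_dualInftyToOne_oneToDualInfty
  have hidem : ∀ xss, ι (W (ι (W xss))) = ι (W xss) := fun xss => by rw [hWι]
  have hP₀ : ι ∘L W ≠ 0 := fun h => by
    simpa [hWι _, hι_single] using congr($h (ι (lp.single 1 0 1)) (lp.single ∞ 0 1))
  refine ⟨ι ∘L W, fun _ _ => rfl, ?_, hidem, ?_⟩
  · refine le_antisymm ?_ (one_le_norm_of_isIdempotentElem (p := ι ∘L W)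
      (ContinuousLinearMap.ext hidem) hP₀)
    calc ‖ι ∘L W‖ ≤ ‖ι‖ * ‖W‖ := ι.opNorm_comp_le W
      _ ≤ 1 * 1 := by gcongr; exacts [lp.norm_oneToDualInfty_le, lp.norm_dualInftyToOne_le]
      _ = 1 := one_mul 1
  · rw [ContinuousLinearMap.coe_comp, hWι.surjective.range_comp]
    ext xhat
    constructor
    · rintro ⟨x, rfl⟩
      exact ⟨x, fun _ => rfl⟩
    · rintro ⟨x, hx⟩
      exact ⟨x, ContinuousLinearMap.ext fun xs => (hx xs).symm⟩
end
end

section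
/- Let T : ℓ¹ → ℓ∞ be defined by (Tx)_m = x_m + 2Σ_{n>m} x_n. Then every standard unit vector e*_n of ℓ∞ lies in the range of T; explicitly, for odd n, T(2,−2,2,−2,…,2,−2,1,0,0,…) = e*_n (with the 1 in the n-th place), and for even n, T(−2,2,−2,…,2,−2,1,0,0,…) = e*_n. -/
/-!
The tail sums `t m = ∑_{k ≥ m} y k` of `y = yseq n` are `(-1) ^ (n - m)` for `m ≤ n` and vanish
beyond `n`. Since `(T x)_m = x m + 2 ∑_{k > m} x k = t m + t (m + 1)`, consecutive tails cancel
below `n`, leaving `1` at `n` and `0` everywhere else.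
-/

noncomputable section

/-- The operator T coordinatewise: (Tx)_m = x_m + 2 Σ_{n>m} x_n. -/
def Tfun (x : ℕ → ℝ) (m : ℕ) : ℝ :=
  x m + 2 * ∑' n, if m < n then x n else 0

/-- The finitely supported sequence y^{(n)}: alternating ±2 below n, 1 at n, 0 above. -/
def yseq (n m : ℕ) : ℝ :=
  if m = n then 1 else if m < n then (if Even (n - m) then 2 else -2) else 0

open Finset

lemma tsum_ite_lt_eq_sum_Ico {x : ℕ → ℝ} {N : ℕ} (hx : ∀ k, N < k → x k = 0) (m : ℕ) :
    ∑' k, (if m < k then x k else 0) = ∑ k ∈ Ico (m + 1) (N + 1), x k := by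
  rw [tsum_eq_sum (s := Ico (m + 1) (N + 1))]
  · exact sum_congr rfl fun k hk => if_pos (mem_Ico.mp hk).1
  · intro k hk
    rw [mem_Ico, not_and_or, not_le, not_lt] at hk
    rcases hk with hkm | hNk
    · exact if_neg (by omega)
    · rw [hx k (by omega), ite_self]

lemma Tfun_eq_sum_Ico_add_sum_Ico {x : ℕ → ℝ} {N : ℕ} (hx : ∀ k, N < k → x k = 0) (m : ℕ) :
    Tfun x m = ∑ k ∈ Ico m (N + 1), x k + ∑ k ∈ Ico (m + 1) (N + 1), x k := by
  rw [Tfun, tsum_ite_lt_eq_sum_Ico hx]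
  rcases le_or_gt m N with hmN | hNm
  · rw [sum_eq_sum_Ico_succ_bot (show m < N + 1 by omega) x]
    ring
  · rw [hx m hNm, Ico_eq_empty_of_le (by omega), Ico_eq_empty_of_le (by omega)]
    simp

lemma yseq_eq_zero_of_lt {n m : ℕ} (h : n < m) : yseq n m = 0 := by
  rw [yseq, if_neg (by omega), if_neg (by omega)]

lemma yseq_eq_two_mul_neg_one_pow {n m : ℕ} (h : m < n) : yseq n m = 2 * (-1) ^ (n - m) := by
  rw [yseq, if_neg (by omega), if_pos h]
  rcases Nat.even_or_odd (n - m) with he | ho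
  · rw [if_pos he, he.neg_one_pow, mul_one]
  · rw [if_neg (Nat.not_even_iff_odd.mpr ho), ho.neg_one_pow, mul_neg_one]

lemma sum_Ico_yseq (n m : ℕ) :
    ∑ k ∈ Ico m (n + 1), yseq n k = if m ≤ n then (-1) ^ (n - m) else 0 := by
  rcases le_or_gt m n with hmn | hnm
  · rw [if_pos hmn]
    induction hmn using Nat.decreasingInduction with
    | self => simp [yseq]
    | of_succ m hmn ih =>
      rw [sum_eq_sum_Ico_succ_bot (by omega), ih, yseq_eq_two_mul_neg_one_pow hmn,
        show n - m = n - (m + 1) + 1 by omega, pow_succ]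
      ring
  · rw [if_neg (by omega), Ico_eq_empty_of_le (by omega), sum_empty]

theorem unit_vectors_in_range_T (n : ℕ) :
    Summable (fun m => |yseq n m|) ∧
    ∀ m : ℕ, Tfun (yseq n) m = if m = n then 1 else 0 := by
  have hsupp : ∀ k, n < k → yseq n k = 0 := fun k => yseq_eq_zero_of_lt
  refine ⟨summable_of_ne_finset_zero (s := range (n + 1)) fun m hm => ?_, fun m => ?_⟩
  · rw [yseq_eq_zero_of_lt (by simpa using hm), abs_zero]
  rw [Tfun_eq_sum_Ico_add_sum_Ico hsupp, sum_Ico_yseq, sum_Ico_yseq]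
  rcases lt_trichotomy m n with hmn | rfl | hnm
  · rw [if_pos hmn.le, if_pos (show m + 1 ≤ n from hmn), if_neg hmn.ne, show n - m = n - (m + 1) + 1 by omega, pow_succ]
    ring
  · simp
  · rw [if_neg (by omega), if_neg (by omega), if_neg hnm.ne']
    ring

end
end
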